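/- Fix vectors p₁,…,p₅, u₁,…,u₅ ∈ ℝ³, and let Sol denote the set of all solutions of the IOD system for the data (pᵢ, uᵢ). If Sol is finite, then its cardinality is divisible by 8. -/

import Mathlib

/-!
The three sign symmetries are commuting involutions of the solution set, and on solutions
`λ₁ ≠ 0`, `λ₂ ≠ 0`, `w ≠ 0` (they normalize `v₁`, `v₂`, `w`). Hence negating `λ₂` matches the
solutions with `λ₂ > 0` bijectively with those with `λ₂ < 0`, halving the count; among those,
negating `λ₁` halves it again, and among those, negating `w` once more, with `w` compared to `0`
lexicographically.
-/

/-- The cross product on `EuclideanSpace ℝ (Fin 3)`. -/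
noncomputable def cross3 (x y : EuclideanSpace ℝ (Fin 3)) : EuclideanSpace ℝ (Fin 3) :=
  (EuclideanSpace.equiv (Fin 3) ℝ).symm
    ![x 1 * y 2 - x 2 * y 1, x 2 * y 0 - x 0 * y 2, x 0 * y 1 - x 1 * y 0]

/-- The 15-equation polynomial system for angles-only initial orbit determination:
with `v₂ = λ₂ (w × u₁)`, `v₁ = λ₁ (v₂ × w)`, `rᵢ = pᵢ + ρᵢ uᵢ`, `xᵢ = ⟨rᵢ, v₁⟩`,
`yᵢ = ⟨rᵢ, v₂⟩`, the constraints are: `w`, `v₁`, `v₂` are unit vectors, each `rᵢ`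
lies in the orbital plane, the five planar points lie on the normalized conic with
coefficients `(a,b,c,d,e)`, and the two focal polynomials vanish. -/
noncomputable def IsIODSolution (p u : Fin 5 → EuclideanSpace ℝ (Fin 3))
    (w : EuclideanSpace ℝ (Fin 3)) (l₁ l₂ : ℝ) (ρ : Fin 5 → ℝ)
    (a b c d e : ℝ) : Prop :=
  let v₂ : EuclideanSpace ℝ (Fin 3) := l₂ • cross3 w (u 0)
  let v₁ : EuclideanSpace ℝ (Fin 3) := l₁ • cross3 v₂ w
  let r : Fin 5 → EuclideanSpace ℝ (Fin 3) := fun i => p i + ρ i • u i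
  let x : Fin 5 → ℝ := fun i => (inner ℝ (r i) v₁ : ℝ)
  let y : Fin 5 → ℝ := fun i => (inner ℝ (r i) v₂ : ℝ)
  (inner ℝ w w : ℝ) = 1 ∧ (inner ℝ v₁ v₁ : ℝ) = 1 ∧ (inner ℝ v₂ v₂ : ℝ) = 1 ∧
  (∀ i, (inner ℝ (r i) w : ℝ) = 0) ∧
  (∀ i, a * x i ^ 2 + b * y i ^ 2 + c * x i * y i + d * x i + e * y i + 1 = 0) ∧
  e ^ 2 - 4 * b - d ^ 2 + 4 * a = 0 ∧
  d * e - 2 * c = 0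

lemma Set.ncard_eq_two_mul_ncard_inter_pos {α G : Type*} [AddCommGroup G] [LinearOrder G]
    [IsOrderedAddMonoid G] {s : Set α} (hs : s.Finite) {σ : α → α} (hσ : Function.Involutive σ)
    (hσs : Set.MapsTo σ s s) {f : α → G} (hf : ∀ x, f (σ x) = -f x) (hf₀ : ∀ x ∈ s, f x ≠ 0) :
    s.ncard = 2 * (s ∩ {x | 0 < f x}).ncard := by
  have himage : σ '' (s ∩ {x | 0 < f x}) = s \ {x | 0 < f x} := by
    ext y
    simp only [Set.mem_image, Set.mem_inter_iff, Set.mem_sdiff, Set.mem_ofPred_eq, not_lt]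
    constructor
    · rintro ⟨x, ⟨hx, hfx⟩, rfl⟩
      exact ⟨hσs hx, by rw [hf]; exact (neg_neg_of_pos hfx).le⟩
    · rintro ⟨hy, hfy⟩
      refine ⟨σ y, ⟨hσs hy, ?_⟩, hσ y⟩
      rw [hf, neg_pos]
      exact lt_of_le_of_ne hfy (hf₀ y hy)
  rw [← Set.ncard_inter_add_ncard_sdiff_eq_ncard s {x | 0 < f x} hs, ← himage,
    Set.ncard_image_of_injective _ hσ.injective, two_mul]

lemma cross3_neg_left (x y : EuclideanSpace ℝ (Fin 3)) : cross3 (-x) y = -cross3 x y := by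
  ext i; fin_cases i <;> simp [cross3] <;> ring

lemma cross3_neg_right (x y : EuclideanSpace ℝ (Fin 3)) : cross3 x (-y) = -cross3 x y := by
  ext i; fin_cases i <;> simp [cross3] <;> ring

namespace IsIODSolution

variable {p u : Fin 5 → EuclideanSpace ℝ (Fin 3)} {w : EuclideanSpace ℝ (Fin 3)} {l₁ l₂ : ℝ}
  {ρ : Fin 5 → ℝ} {a b c d e : ℝ}

-- `v₂ ↦ -v₂` and `v₁ ↦ -v₁`, so `(x, y) ↦ (-x, -y)`.
lemma neg_l₂ (h : IsIODSolution p u w l₁ l₂ ρ a b c d e) :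
    IsIODSolution p u w l₁ (-l₂) ρ a b c (-d) (-e) := by
  obtain ⟨hw, hv₁, hv₂, hplane, hconic, hfocal₁, hfocal₂⟩ := h
  simp only [IsIODSolution, neg_smul, cross3_neg_left, smul_neg, inner_neg_left, inner_neg_right,
    neg_neg]
  exact ⟨hw, hv₁, hv₂, hplane, fun i => by linear_combination hconic i,
    by linear_combination hfocal₁, by linear_combination hfocal₂⟩

-- `v₁ ↦ -v₁`, so `x ↦ -x`.
lemma neg_l₁ (h : IsIODSolution p u w l₁ l₂ ρ a b c d e) :
    IsIODSolution p u w (-l₁) l₂ ρ a b (-c) (-d) e := by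
  obtain ⟨hw, hv₁, hv₂, hplane, hconic, hfocal₁, hfocal₂⟩ := h
  simp only [IsIODSolution, neg_smul, inner_neg_left, inner_neg_right, neg_neg]
  exact ⟨hw, hv₁, hv₂, hplane, fun i => by linear_combination hconic i,
    by linear_combination hfocal₁, by linear_combination -hfocal₂⟩

-- `v₂ ↦ -v₂` while `v₁ = λ₁ (v₂ × w)` is unchanged, so `y ↦ -y`.
lemma neg_w (h : IsIODSolution p u w l₁ l₂ ρ a b c d e) :
    IsIODSolution p u (-w) l₁ l₂ ρ a b (-c) d (-e) := by
  obtain ⟨hw, hv₁, hv₂, hplane, hconic, hfocal₁, hfocal₂⟩ := h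
  simp only [IsIODSolution, cross3_neg_left, cross3_neg_right, smul_neg, neg_neg, inner_neg_left,
    inner_neg_right]
  exact ⟨hw, hv₁, hv₂, fun i => by rw [hplane i, neg_zero], fun i => by linear_combination hconic i,
    by linear_combination hfocal₁, by linear_combination -hfocal₂⟩

lemma l₁_ne_zero (h : IsIODSolution p u w l₁ l₂ ρ a b c d e) : l₁ ≠ 0 := by
  rintro rfl
  simpa using h.2.1

lemma l₂_ne_zero (h : IsIODSolution p u w l₁ l₂ ρ a b c d e) : l₂ ≠ 0 := by
  rintro rfl
  simpa using h.2.2.1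

lemma w_ne_zero (h : IsIODSolution p u w l₁ l₂ ρ a b c d e) : w ≠ 0 := by
  rintro rfl
  simpa using h.1

end IsIODSolution

abbrev IODTuple : Type :=
  EuclideanSpace ℝ (Fin 3) × ℝ × ℝ × (Fin 5 → ℝ) × ℝ × ℝ × ℝ × ℝ × ℝ

def iodSolutions (p u : Fin 5 → EuclideanSpace ℝ (Fin 3)) : Set IODTuple :=
  {T | IsIODSolution p u T.1 T.2.1 T.2.2.1 T.2.2.2.1
      T.2.2.2.2.1 T.2.2.2.2.2.1 T.2.2.2.2.2.2.1 T.2.2.2.2.2.2.2.1 T.2.2.2.2.2.2.2.2}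

namespace IODTuple

def negL₂ : IODTuple → IODTuple
  | (w, l₁, l₂, ρ, a, b, c, d, e) => (w, l₁, -l₂, ρ, a, b, c, -d, -e)

def negL₁ : IODTuple → IODTuple
  | (w, l₁, l₂, ρ, a, b, c, d, e) => (w, -l₁, l₂, ρ, a, b, -c, -d, e)

def negW : IODTuple → IODTuple
  | (w, l₁, l₂, ρ, a, b, c, d, e) => (-w, l₁, l₂, ρ, a, b, -c, d, -e)

lemma negL₂_involutive : Function.Involutive negL₂ := fun _ => by simp [negL₂]

lemma negL₁_involutive : Function.Involutive negL₁ := fun _ => by simp [negL₁]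

lemma negW_involutive : Function.Involutive negW := fun _ => by simp [negW]

def lexW (T : IODTuple) : Lex (Fin 3 → ℝ) := toLex (WithLp.ofLp T.1)

variable (p u : Fin 5 → EuclideanSpace ℝ (Fin 3))

lemma mapsTo_negL₂ : Set.MapsTo negL₂ (iodSolutions p u) (iodSolutions p u) :=
  fun _ h => IsIODSolution.neg_l₂ h

lemma mapsTo_negL₁ : Set.MapsTo negL₁ (iodSolutions p u) (iodSolutions p u) :=
  fun _ h => IsIODSolution.neg_l₁ h

lemma mapsTo_negW : Set.MapsTo negW (iodSolutions p u) (iodSolutions p u) :=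
  fun _ h => IsIODSolution.neg_w h

end IODTuple

open IODTuple in
/-- If the set of solutions of the IOD system is finite, its cardinality is
divisible by 8. -/
theorem iod_solution_count_div_eight (p u : Fin 5 → EuclideanSpace ℝ (Fin 3))
    (Sol : Set (EuclideanSpace ℝ (Fin 3) × ℝ × ℝ × (Fin 5 → ℝ) × ℝ × ℝ × ℝ × ℝ × ℝ))
    (hSol : Sol = {T | IsIODSolution p u T.1 T.2.1 T.2.2.1 T.2.2.2.1
      T.2.2.2.2.1 T.2.2.2.2.2.1 T.2.2.2.2.2.2.1 T.2.2.2.2.2.2.2.1 T.2.2.2.2.2.2.2.2})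
    (hfin : Sol.Finite) :
    8 ∣ Sol.ncard := by
  change Sol = iodSolutions p u at hSol
  subst hSol
  set S₁ := iodSolutions p u ∩ {T | 0 < T.2.2.1}
  set S₂ := S₁ ∩ {T | 0 < T.2.1}
  have hS₁ : S₁.Finite := hfin.subset Set.inter_subset_left
  have h₁ := Set.ncard_eq_two_mul_ncard_inter_pos hfin negL₂_involutive (mapsTo_negL₂ p u)
    (f := fun T => T.2.2.1) (fun _ => rfl) fun _ hT => IsIODSolution.l₂_ne_zero hT
  have h₂ := Set.ncard_eq_two_mul_ncard_inter_pos (s := S₁) hS₁ negL₁_involutive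
    (fun _ ⟨hT, hl₂⟩ => ⟨mapsTo_negL₁ p u hT, hl₂⟩)
    (f := fun T => T.2.1) (fun _ => rfl) fun _ hT => IsIODSolution.l₁_ne_zero hT.1
  have h₃ := Set.ncard_eq_two_mul_ncard_inter_pos (s := S₂) (hS₁.subset Set.inter_subset_left)
    negW_involutive (fun _ ⟨⟨hT, hl₂⟩, hl₁⟩ => ⟨⟨mapsTo_negW p u hT, hl₂⟩, hl₁⟩)
    (f := lexW) (fun _ => rfl) fun _ hT => by simpa [lexW] using IsIODSolution.w_ne_zero hT.1.1
  exact ⟨_, by rw [h₁, h₂, h₃]; ring⟩
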